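/- arXiv:2009.07441 — 6 statements merged into one kernel-verified Lean document; each statement's English description precedes it below -/
import Mathlib

section
/- Let X be a free ℤ-module of finite rank, let R ⊆ X ∖ {0} be a finite subset, and let c, c' : R → Hom_ℤ(X, ℤ) be two maps such that c(α)(α) = 2 = c'(α)(α) for every α ∈ R, and such that for every α ∈ R the reflections s_{α,c(α)} and s_{α,c'(α)} map R onto R. Assume that the subgroup of Aut_ℤ(X) generated by {s_{α,c(α)} : α ∈ R} equals the subgroup generated by {s_{α,c'(α)} : α ∈ R}, and that this common group W is finite. Then c = c', i.e. the coroot attached to each root is uniquely determined by the pair (X, R) together with the Weyl group W acting on X. (This is the content of the paper's lemma that a root datum is determined, up to isomorphism, by its character group X with the set of roots R and by its Weyl group with its action on X.) -/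
/-!
Two reflections `s_f`, `s_g` along the same root `x` compose to the transvection
`z ↦ z + (f - g)(z) • x`, which fixes `x`; so its `n`-th power is
`z ↦ z + n (f - g)(z) • x`. In a finite group this power is the identity for some `n > 0`,
and over a torsion-free module this forces `f = g`.
-/

namespace Module

variable {R M : Type*} [CommRing R] [AddCommGroup M] [Module R M] {x : M} {f g : Dual R M}

lemma reflection_mul_reflection_apply_of_same_root (hf : f x = 2) (hg : g x = 2) (z : M) :
    (reflection hg * reflection hf) z = z + (f z - g z) • x := by
  simp only [LinearEquiv.mul_apply, reflection_apply, map_sub, map_smul, hg]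
  module

lemma reflection_mul_reflection_pow_apply_of_same_root (hf : f x = 2) (hg : g x = 2)
    (n : ℕ) (z : M) :
    ((reflection hg * reflection hf) ^ n) z = z + ((n : R) * (f z - g z)) • x := by
  induction n with
  | zero => simp
  | succ n ih =>
    simp only [pow_succ', LinearEquiv.mul_apply, ih, map_add, map_smul,
      reflection_mul_reflection_apply_of_same_root hf hg, hf, hg]
    push_cast
    module

lemma Dual.eq_of_isOfFinOrder_reflection_mul_reflection [CharZero R] [IsDomain R]
    [IsTorsionFree R M] (hx : x ≠ 0) (hf : f x = 2) (hg : g x = 2)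
    (h : IsOfFinOrder (reflection hg * reflection hf)) : f = g := by
  obtain ⟨n, hn, hpow⟩ := isOfFinOrder_iff_pow_eq_one.mp h
  ext z
  have hz := reflection_mul_reflection_pow_apply_of_same_root hf hg n z
  rw [hpow, LinearEquiv.coe_one, id_eq, left_eq_add, smul_eq_zero_iff_left hx,
    mul_eq_zero, Nat.cast_eq_zero, sub_eq_zero] at hz
  exact hz.resolve_left hn.ne'

end Module

theorem coroots_determined_by_roots_and_weyl_group_general
    {X : Type*} [AddCommGroup X] [Module ℤ X] [Module.Free ℤ X]
    (R : Finset X) (hR0 : (0 : X) ∉ R)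
    (c c' : X → Module.Dual ℤ X)
    (hc2 : ∀ α ∈ R, c α α = 2) (hc'2 : ∀ α ∈ R, c' α α = 2)
    (W : Subgroup (X ≃ₗ[ℤ] X))
    (hW : W = Subgroup.closure
      {g : X ≃ₗ[ℤ] X | ∃ α, ∃ hα : α ∈ R, g = Module.reflection (hc2 α hα)})
    (hW' : W = Subgroup.closure
      {g : X ≃ₗ[ℤ] X | ∃ α, ∃ hα : α ∈ R, g = Module.reflection (hc'2 α hα)})
    (hWfin : Finite W) :
    ∀ α ∈ R, c α = c' α := by
  intro α hα
  have hcW : Module.reflection (hc2 α hα) ∈ W :=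
    hW ▸ Subgroup.subset_closure ⟨α, hα, rfl⟩
  have hc'W : Module.reflection (hc'2 α hα) ∈ W :=
    hW' ▸ Subgroup.subset_closure ⟨α, hα, rfl⟩
  have hfin : IsOfFinOrder (Module.reflection (hc'2 α hα) * Module.reflection (hc2 α hα)) :=
    Submonoid.isOfFinOrder_coe.mpr (isOfFinOrder_of_finite (⟨_, mul_mem hc'W hcW⟩ : W))
  exact Module.Dual.eq_of_isOfFinOrder_reflection_mul_reflection (ne_of_mem_of_not_mem hα hR0)
    (hc2 α hα) (hc'2 α hα) hfin

/-- The coroot attached to each root is uniquely determined by the pair `(X, R)`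
together with the (finite) Weyl group `W` acting on `X`. -/
theorem coroots_determined_by_roots_and_weyl_group
    {X : Type*} [AddCommGroup X] [Module ℤ X] [Module.Free ℤ X] [Module.Finite ℤ X]
    (R : Finset X) (hR0 : (0 : X) ∉ R)
    (c c' : X → Module.Dual ℤ X)
    (hc2 : ∀ α ∈ R, c α α = 2) (hc'2 : ∀ α ∈ R, c' α α = 2)
    (hcR : ∀ α (hα : α ∈ R),
      ⇑(Module.reflection (hc2 α hα)) '' (R : Set X) = (R : Set X))
    (hc'R : ∀ α (hα : α ∈ R),
      ⇑(Module.reflection (hc'2 α hα)) '' (R : Set X) = (R : Set X))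
    (W : Subgroup (X ≃ₗ[ℤ] X))
    (hW : W = Subgroup.closure
      {g : X ≃ₗ[ℤ] X | ∃ α, ∃ hα : α ∈ R, g = Module.reflection (hc2 α hα)})
    (hW' : W = Subgroup.closure
      {g : X ≃ₗ[ℤ] X | ∃ α, ∃ hα : α ∈ R, g = Module.reflection (hc'2 α hα)})
    (hWfin : Finite W) :
    ∀ α ∈ R, c α = c' α :=
  coroots_determined_by_roots_and_weyl_group_general R hR0 c c' hc2 hc'2 W hW hW' hWfin
end

section
/- Let X be a free ℤ-module of finite rank r and let W be a finite subgroup of Aut_ℤ(X). Let α ∈ X be a nonzero element, and suppose s, t ∈ W satisfy s(α) = −α, t(α) = −α, and both fixed submodules {x ∈ X : s(x) = x} and {x ∈ X : t(x) = x} are free of rank r − 1. Then s = t. -/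
/-!
Rationally, `s` is a reflection: its fixed submodule has corank one and meets `ℤ ∙ α` trivially,
so some nonzero multiple of `s x - x` lies in `ℤ ∙ α` for every `x`, and likewise for `t`.
Then `u = t⁻¹ s` fixes `α` and moves every `x` by a rational multiple of `α`, whence
`(u - 1) ^ 2 = 0` and `u ^ n = 1 + n • (u - 1)`. Since `u` lies in the finite group `W` and `X` is
torsion-free, `u = 1`.
-/

open Module Submodule

theorem one_add_pow_of_sq_eq_zero {A : Type*} [Ring A] {a : A} (ha : a ^ 2 = 0) (n : ℕ) :
    (1 + a) ^ n = 1 + n • a := by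
  induction n with
  | zero => simp
  | succ n ih =>
    have haa : a * a = 0 := by rw [← sq, ha]
    rw [pow_succ, ih, succ_nsmul]
    simp only [add_mul, one_mul, mul_add, mul_one, smul_mul_assoc, haa, smul_zero]
    abel

section

variable {R X : Type*} [CommRing R] [IsDomain R] [AddCommGroup X] [Module R X]

theorem Submodule.exists_smul_mem_of_finrank_eq [Module.Finite R X] {N : Submodule R X}
    (h : finrank R N = finrank R X) (x : X) : ∃ c : R, c ≠ 0 ∧ c • x ∈ N := by
  have hQ : finrank R (X ⧸ N) = 0 := by
    have := N.finrank_quotient_add_finrank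
    omega
  obtain ⟨c, hc, hcx⟩ := Module.finrank_eq_zero_iff.mp hQ (N.mkQ x)
  exact ⟨c, hc, (Quotient.mk_eq_zero N).mp hcx⟩

theorem Submodule.finrank_sup_span_singleton_of_disjoint [Module.Finite R X] [IsTorsionFree R X]
    {N : Submodule R X} {α : X} (hα : α ≠ 0) (h : Disjoint N (R ∙ α)) :
    finrank R ↥(N ⊔ R ∙ α) = finrank R N + 1 := by
  have hline : finrank R (R ∙ α) = 1 := by
    simpa using finrank_span_set_eq_card (LinearIndepOn.singleton (v := id) hα)
  have hsum := rank_sup_add_rank_inf_eq N (R ∙ α)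
  rw [h.eq_bot, rank_bot, add_zero, ← Submodule.finrank_eq_rank, ← Submodule.finrank_eq_rank,
    ← Submodule.finrank_eq_rank, hline] at hsum
  exact_mod_cast hsum

theorem exists_smul_sub_mem_span_of_apply_eq_neg [Module.Finite R X] [IsTorsionFree R X]
    [NeZero (2 : R)] {f : Module.End R X} {α : X} (hα : α ≠ 0) (hfα : f α = -α)
    (hfix : finrank R (LinearMap.eqLocus f LinearMap.id) + 1 = finrank R X) (x : X) :
    ∃ c : R, c ≠ 0 ∧ c • (f x - x) ∈ R ∙ α := by
  set K := LinearMap.eqLocus f LinearMap.id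
  have hdisj : Disjoint K (R ∙ α) := by
    rw [disjoint_def]
    rintro _ hK hα'
    obtain ⟨m, rfl⟩ := mem_span_singleton.mp hα'
    have hfix : f (m • α) = m • α := hK
    rw [map_smul, hfα, smul_neg, neg_eq_iff_add_eq_zero, ← two_smul R] at hfix
    exact (smul_eq_zero.mp hfix).resolve_left two_ne_zero
  obtain ⟨c, hc, hcx⟩ := exists_smul_mem_of_finrank_eq
    (by rw [finrank_sup_span_singleton_of_disjoint hα hdisj, hfix]) x
  obtain ⟨y, hy, z, hz, hyz⟩ := mem_sup.mp hcx
  obtain ⟨m, rfl⟩ := mem_span_singleton.mp hz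
  have hfy : f y = y := hy
  refine ⟨c, hc, mem_span_singleton.mpr ⟨-(2 * m), ?_⟩⟩
  calc -(2 * m) • α = f (y + m • α) - (y + m • α) := by rw [map_add, hfy, map_smul, hfα]; module
    _ = c • (f x - x) := by rw [hyz, smul_sub, map_smul]

theorem exists_smul_symm_apply_sub_mem_span {s t : X ≃ₗ[R] X} {α : X} (htα : t α = -α)
    (hs : ∀ x, ∃ c : R, c ≠ 0 ∧ c • (s x - x) ∈ R ∙ α)
    (ht : ∀ x, ∃ c : R, c ≠ 0 ∧ c • (t x - x) ∈ R ∙ α) (x : X) :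
    ∃ c : R, c ≠ 0 ∧ c • (t.symm (s x) - x) ∈ R ∙ α := by
  obtain ⟨a, ha, hax⟩ := hs x
  obtain ⟨b, hb, hbx⟩ := ht x
  have hdiff : (b * a) • (s x - t x) ∈ R ∙ α := by
    rw [show s x - t x = (s x - x) - (t x - x) by abel, smul_sub, mul_smul, mul_comm, mul_smul]
    exact sub_mem (smul_mem _ _ hax) (smul_mem _ _ hbx)
  have hsymm : ∀ y ∈ R ∙ α, t.symm y ∈ R ∙ α := by
    intro y hy
    obtain ⟨m, rfl⟩ := mem_span_singleton.mp hy
    rw [map_smul, t.symm_apply_eq.mpr (by rw [map_neg, htα, neg_neg])]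
    exact smul_mem _ _ (neg_mem (mem_span_singleton_self α))
  refine ⟨b * a, mul_ne_zero hb ha, ?_⟩
  simpa using hsymm _ hdiff

theorem sub_one_sq_eq_zero_of_forall_exists_smul_sub_mem_span [IsTorsionFree R X]
    {f : Module.End R X} {α : X} (hfα : f α = α)
    (h : ∀ x, ∃ c : R, c ≠ 0 ∧ c • (f x - x) ∈ R ∙ α) : (f - 1) ^ 2 = 0 := by
  ext x
  obtain ⟨c, hc, hcx⟩ := h x
  obtain ⟨m, hm⟩ := mem_span_singleton.mp hcx
  have hc_sq : c • (f (f x - x) - (f x - x)) = 0 := by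
    rw [smul_sub, ← map_smul, ← hm, map_smul, hfα, sub_self]
  simpa [sq] using (smul_eq_zero.mp hc_sq).resolve_left hc

theorem Module.End.eq_one_of_isOfFinOrder_of_sub_one_sq_eq_zero [CharZero R] [IsTorsionFree R X]
    {f : Module.End R X} (hf : IsOfFinOrder f) (hsq : (f - 1) ^ 2 = 0) : f = 1 := by
  obtain ⟨n, hn, hpow⟩ := hf.exists_pow_eq_one
  have hn_smul : n • (f - 1) = 0 := by
    simpa [hpow] using one_add_pow_of_sq_eq_zero hsq n
  ext x
  have hnx : (n : R) • (f x - x) = 0 := by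
    simpa [Nat.cast_smul_eq_nsmul] using LinearMap.congr_fun hn_smul x
  simpa [sub_eq_zero] using (smul_eq_zero.mp hnx).resolve_left (Nat.cast_ne_zero.mpr hn.ne')

end

theorem reflection_unique_in_finite_aut_subgroup_general
    {X : Type*} [AddCommGroup X] [Module ℤ X] [Module.Free ℤ X] [Module.Finite ℤ X]
    {r : ℕ} (hrank : Module.finrank ℤ X = r)
    (W : Subgroup (X ≃ₗ[ℤ] X)) (hWfin : Finite W)
    (α : X) (hα : α ≠ 0)
    (s t : X ≃ₗ[ℤ] X) (hs : s ∈ W) (ht : t ∈ W)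
    (hsα : s α = -α) (htα : t α = -α)
    (hsfix : Module.finrank ℤ
      (LinearMap.eqLocus (s : X →ₗ[ℤ] X) (LinearMap.id : X →ₗ[ℤ] X)) = r - 1)
    (htfix : Module.finrank ℤ
      (LinearMap.eqLocus (t : X →ₗ[ℤ] X) (LinearMap.id : X →ₗ[ℤ] X)) = r - 1) :
    s = t := by
  have : Nontrivial X := ⟨α, 0, hα⟩
  have hr : 0 < r := hrank ▸ Module.finrank_pos
  -- `hsfix` and `htfix` see the fixed submodules through `AddCommGroup.toIntModule` rather than
  -- `Submodule.module`; the two agree because `Module ℤ` is a subsingleton.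
  have hline {f : X ≃ₗ[ℤ] X} (hfα : f α = -α)
      (hf : finrank ℤ (LinearMap.eqLocus (f : X →ₗ[ℤ] X) LinearMap.id) = r - 1) :=
    exists_smul_sub_mem_span_of_apply_eq_neg (f := (f : Module.End ℤ X)) hα hfα <| by
      have hcorank : finrank ℤ (LinearMap.eqLocus (f : X →ₗ[ℤ] X) LinearMap.id) + 1 =
          finrank ℤ X := by
        omega
      convert hcorank <;> first | rfl | exact Subsingleton.elim _ _
  have hu : IsOfFinOrder ((t⁻¹ * s : X ≃ₗ[ℤ] X) : Module.End ℤ X) :=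
    LinearEquiv.automorphismGroup.toLinearMapMonoidHom.isOfFinOrder
      (W.subtype.isOfFinOrder (isOfFinOrder_of_finite (⟨t⁻¹ * s, W.mul_mem (W.inv_mem ht) hs⟩ : W)))
  have hsq : ((t⁻¹ * s : X ≃ₗ[ℤ] X) - 1 : Module.End ℤ X) ^ 2 = 0 :=
    sub_one_sq_eq_zero_of_forall_exists_smul_sub_mem_span
      (by simp [hsα, neg_eq_iff_eq_neg, t.symm_apply_eq, htα])
      (exists_smul_symm_apply_sub_mem_span htα (hline hsα hsfix) (hline htα htfix))
  have hone : ((t⁻¹ * s : X ≃ₗ[ℤ] X) : Module.End ℤ X) = (1 : X ≃ₗ[ℤ] X) :=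
    Module.End.eq_one_of_isOfFinOrder_of_sub_one_sq_eq_zero hu hsq
  exact (inv_mul_eq_one.mp (LinearEquiv.toLinearMap_injective hone)).symm

/-- In a finite subgroup `W` of `Aut_ℤ(X)`, an element sending a fixed nonzero `α` to `-α`
and whose fixed submodule is free of rank `r - 1` is unique. -/
theorem reflection_unique_in_finite_aut_subgroup
    {X : Type*} [AddCommGroup X] [Module ℤ X] [Module.Free ℤ X] [Module.Finite ℤ X]
    {r : ℕ} (hrank : Module.finrank ℤ X = r)
    (W : Subgroup (X ≃ₗ[ℤ] X)) (hWfin : Finite W)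
    (α : X) (hα : α ≠ 0)
    (s t : X ≃ₗ[ℤ] X) (hs : s ∈ W) (ht : t ∈ W)
    (hsα : s α = -α) (htα : t α = -α)
    (hsfree : Module.Free ℤ
      (LinearMap.eqLocus (s : X →ₗ[ℤ] X) (LinearMap.id : X →ₗ[ℤ] X)))
    (htfree : Module.Free ℤ
      (LinearMap.eqLocus (t : X →ₗ[ℤ] X) (LinearMap.id : X →ₗ[ℤ] X)))
    (hsfix : Module.finrank ℤ
      (LinearMap.eqLocus (s : X →ₗ[ℤ] X) (LinearMap.id : X →ₗ[ℤ] X)) = r - 1)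
    (htfix : Module.finrank ℤ
      (LinearMap.eqLocus (t : X →ₗ[ℤ] X) (LinearMap.id : X →ₗ[ℤ] X)) = r - 1) :
    s = t :=
  reflection_unique_in_finite_aut_subgroup_general hrank W hWfin α hα s t hs ht hsα htα hsfix htfix
end

section
/- Let V be a nonzero finite-dimensional real inner product space and let R be a finite subset of V ∖ {0} such that R spans V and, for every α ∈ R, the orthogonal reflection s_α(v) = v − (2⟨v,α⟩/⟨α,α⟩)·α maps R into R. Assume R is irreducible, i.e. R cannot be written as a union of two nonempty subsets R₁ and R₂ with ⟨α, β⟩ = 0 for all α ∈ R₁ and β ∈ R₂. Let W be the subgroup of GL(V) generated by {s_α : α ∈ R}. Then the only linear subspaces of V invariant under W are 0 and V (so V is an irreducible representation of W), and the subspace of W-fixed vectors {v ∈ V : w(v) = v for all w ∈ W} is 0. -/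
/-!
A `W`-invariant subspace `U` is invariant under every reflection `s_α`, and this forces each root
into `U` or into `Uᗮ`. Irreducibility puts all roots on the same side, so, as the roots span, `U`
or `Uᗮ` is everything. A `W`-fixed vector is fixed by every `s_α`, i.e. orthogonal to every root,
hence zero.
-/

open scoped RealInnerProductSpace

section Reflections

variable {V : Type*} [NormedAddCommGroup V] [InnerProductSpace ℝ V]

/-- The orthogonal reflection `v ↦ v - (2⟪v,α⟫/⟪α,α⟫)·α` attached to `α`, as a linear map. -/
noncomputable def sReflAux (α : V) : V →ₗ[ℝ] V :=
  LinearMap.id -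
    (((2 / ⟪α, α⟫) • ((innerSL ℝ α : V →L[ℝ] ℝ) : V →ₗ[ℝ] ℝ)).smulRight α)

lemma sReflAux_apply (α v : V) :
    sReflAux α v = v - (2 * ⟪v, α⟫ / ⟪α, α⟫) • α := by
  have h : (2 / ⟪α, α⟫) * ⟪α, v⟫ = 2 * ⟪v, α⟫ / ⟪α, α⟫ := by
    rw [real_inner_comm α v]; ring
  simp only [sReflAux, LinearMap.sub_apply, LinearMap.id_apply, LinearMap.smulRight_apply,
    LinearMap.smul_apply, ContinuousLinearMap.coe_coe, innerSL_apply_apply, smul_eq_mul, h]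

lemma sReflAux_sReflAux (α v : V) : sReflAux α (sReflAux α v) = v := by
  rcases eq_or_ne (⟪α, α⟫) 0 with hb | hb
  · have hα : α = 0 := inner_self_eq_zero.mp hb
    simp [sReflAux_apply, hα]
  · rw [sReflAux_apply, sReflAux_apply]
    have h1 : ⟪v - (2 * ⟪v, α⟫ / ⟪α, α⟫) • α, α⟫ = -⟪v, α⟫ := by
      rw [inner_sub_left, real_inner_smul_left]
      field_simp
      ring
    rw [h1]
    have h2 : 2 * -⟪v, α⟫ / ⟪α, α⟫ = -(2 * ⟪v, α⟫ / ⟪α, α⟫) := by ring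
    rw [h2, neg_smul]
    abel

/-- The orthogonal reflection attached to `α`, as a linear automorphism of `V`. -/
noncomputable def sRefl (α : V) : V ≃ₗ[ℝ] V :=
  LinearEquiv.ofLinear (sReflAux α) (sReflAux α)
    (LinearMap.ext fun v => by simp [LinearMap.comp_apply, sReflAux_sReflAux])
    (LinearMap.ext fun v => by simp [LinearMap.comp_apply, sReflAux_sReflAux])

lemma sRefl_apply (α v : V) :
    sRefl α v = v - (2 * ⟪v, α⟫ / ⟪α, α⟫) • α :=
  sReflAux_apply α v

end Reflections

section IrreducibleRootSets

variable {V : Type*} [NormedAddCommGroup V] [InnerProductSpace ℝ V]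

lemma sub_sRefl_apply (α v : V) : v - sRefl α v = (2 * ⟪v, α⟫ / ⟪α, α⟫) • α := by
  rw [sRefl_apply, sub_sub_cancel]

lemma sRefl_apply_eq_self_iff {α : V} (hα : α ≠ 0) (v : V) : sRefl α v = v ↔ ⟪v, α⟫ = 0 := by
  rw [eq_comm, ← sub_eq_zero, sub_sRefl_apply]
  simp [hα]

/-- If some `u ∈ U` has `⟪u, α⟫ ≠ 0`, then `u - s_α u ∈ U` is a nonzero multiple of `α`. -/
lemma mem_or_mem_orthogonal_of_forall_sRefl_mem {α : V} (hα : α ≠ 0) {U : Submodule ℝ V}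
    (hU : ∀ u ∈ U, sRefl α u ∈ U) : α ∈ U ∨ α ∈ Uᗮ := by
  by_cases horth : ∀ u ∈ U, ⟪u, α⟫ = 0
  · exact Or.inr ((U.mem_orthogonal α).mpr horth)
  push Not at horth
  obtain ⟨u, hu, hne⟩ := horth
  have hcoef : 2 * ⟪u, α⟫ / ⟪α, α⟫ ≠ 0 :=
    div_ne_zero (mul_ne_zero two_ne_zero hne) (inner_self_ne_zero.mpr hα)
  have hmul : (2 * ⟪u, α⟫ / ⟪α, α⟫) • α ∈ U := sub_sRefl_apply α u ▸ U.sub_mem hu (hU u hu)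
  exact Or.inl ((U.smul_mem_iff hcoef).mp hmul)

lemma eq_zero_of_span_eq_top_of_forall_inner_eq_zero {R : Set V}
    (hspan : Submodule.span ℝ R = ⊤) {v : V} (hv : ∀ α ∈ R, ⟪v, α⟫ = 0) : v = 0 := by
  have hle : Submodule.span ℝ R ≤ (ℝ ∙ v)ᗮ := Submodule.span_le.mpr fun α hα =>
    Submodule.mem_orthogonal_singleton_iff_inner_right.mpr (hv α hα)
  rwa [hspan, top_le_iff, Submodule.orthogonal_eq_top_iff, Submodule.span_singleton_eq_bot] at hle

def IsOrthogonallyIrreducible (R : Set V) : Prop :=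
  ¬ ∃ R₁ R₂ : Set V, R₁.Nonempty ∧ R₂.Nonempty ∧ R = R₁ ∪ R₂ ∧ ∀ α ∈ R₁, ∀ β ∈ R₂, ⟪α, β⟫ = 0

lemma IsOrthogonallyIrreducible.subset_or_subset_orthogonal {R : Set V}
    (hR : IsOrthogonallyIrreducible R) {U : Submodule ℝ V} (hRU : R ⊆ U ∪ Uᗮ) :
    R ⊆ U ∨ R ⊆ Uᗮ := by
  by_contra! hnot
  obtain ⟨β, hβR, hβU⟩ := Set.not_subset.mp hnot.1
  obtain ⟨γ, hγR, hγU⟩ := Set.not_subset.mp hnot.2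
  refine hR ⟨R ∩ U, R ∩ Uᗮ, ⟨γ, hγR, ?_⟩, ⟨β, hβR, ?_⟩, ?_, ?_⟩
  · exact (hRU hγR).resolve_right hγU
  · exact (hRU hβR).resolve_left hβU
  · rw [← Set.inter_union_distrib_left, Set.inter_eq_left.mpr hRU]
  · exact fun α hα β hβ => U.inner_right_of_mem_orthogonal hα.2 hβ.2

end IrreducibleRootSets

theorem weyl_group_acts_irreducibly_general
    {V : Type*} [NormedAddCommGroup V] [InnerProductSpace ℝ V]
    (R : Finset V) (hR0 : ∀ α ∈ R, α ≠ 0)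
    (hspan : Submodule.span ℝ (R : Set V) = ⊤)
    (hirred : ¬ ∃ R₁ R₂ : Set V, R₁.Nonempty ∧ R₂.Nonempty ∧ (R : Set V) = R₁ ∪ R₂ ∧
      ∀ α ∈ R₁, ∀ β ∈ R₂, ⟪α, β⟫ = 0)
    (W : Subgroup (V ≃ₗ[ℝ] V))
    (hWdef : W = Subgroup.closure {g : V ≃ₗ[ℝ] V | ∃ α ∈ R, g = sRefl α}) :
    (∀ U : Submodule ℝ V, (∀ w ∈ W, ∀ u ∈ U, w u ∈ U) → U = ⊥ ∨ U = ⊤) ∧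
      ∀ v : V, (∀ w ∈ W, w v = v) → v = 0 := by
  have hsW : ∀ α ∈ R, sRefl α ∈ W := fun α hα => hWdef ▸ Subgroup.subset_closure ⟨α, hα, rfl⟩
  constructor
  · intro U hU
    have hRU : (R : Set V) ⊆ U ∪ Uᗮ := fun α hα =>
      mem_or_mem_orthogonal_of_forall_sRefl_mem (hR0 α hα) (hU _ (hsW α hα))
    rcases IsOrthogonallyIrreducible.subset_or_subset_orthogonal hirred hRU with hsub | hsub
    · right
      rw [eq_top_iff, ← hspan]
      exact Submodule.span_le.mpr hsub
    · left
      rw [← Submodule.orthogonal_eq_top_iff, eq_top_iff, ← hspan]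
      exact Submodule.span_le.mpr hsub
  · intro v hv
    exact eq_zero_of_span_eq_top_of_forall_inner_eq_zero hspan fun α hα =>
      (sRefl_apply_eq_self_iff (hR0 α hα) v).mp (hv _ (hsW α hα))

/-- For an irreducible root system `R` spanning a nonzero finite-dimensional real inner
product space `V`, the Weyl group `W` generated by the reflections `s_α` (for `α ∈ R`) acts
irreducibly on `V`, and the subspace of `W`-fixed vectors is zero. -/
theorem weyl_group_acts_irreducibly
    {V : Type*} [NormedAddCommGroup V] [InnerProductSpace ℝ V] [FiniteDimensional ℝ V]
    [Nontrivial V]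
    (R : Finset V) (hR0 : ∀ α ∈ R, α ≠ 0)
    (hspan : Submodule.span ℝ (R : Set V) = ⊤)
    (hstab : ∀ α ∈ R, ∀ β ∈ R, sRefl α β ∈ R)
    (hirred : ¬ ∃ R₁ R₂ : Set V, R₁.Nonempty ∧ R₂.Nonempty ∧ (R : Set V) = R₁ ∪ R₂ ∧
      ∀ α ∈ R₁, ∀ β ∈ R₂, ⟪α, β⟫ = 0)
    (W : Subgroup (V ≃ₗ[ℝ] V))
    (hWdef : W = Subgroup.closure {g : V ≃ₗ[ℝ] V | ∃ α ∈ R, g = sRefl α}) :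
    (∀ U : Submodule ℝ V, (∀ w ∈ W, ∀ u ∈ U, w u ∈ U) → U = ⊥ ∨ U = ⊤) ∧
      ∀ v : V, (∀ w ∈ W, w v = v) → v = 0 :=
  weyl_group_acts_irreducibly_general R hR0 hspan hirred W hWdef
end

section
/- Let V be a finite-dimensional real inner product space and let R be a finite subset of V ∖ {0} such that for every α ∈ R the orthogonal reflection s_α(v) = v − (2⟨v,α⟩/⟨α,α⟩)·α maps R into R. If U ⊆ V is a linear subspace satisfying s_α(U) ⊆ U for all α ∈ R, then every α ∈ R lies either in U or in the orthogonal complement U^⊥. -/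
open scoped RealInnerProductSpace

/-- If a subspace `U` is invariant under all reflections `s_α` attached to the elements of a
finite set `R` of nonzero vectors stable under these reflections, then every `α ∈ R` lies
in `U` or in its orthogonal complement. -/
theorem root_in_subspace_or_orthogonal
    {V : Type*} [NormedAddCommGroup V] [InnerProductSpace ℝ V] [FiniteDimensional ℝ V]
    (R : Finset V) (hR0 : ∀ α ∈ R, α ≠ 0)
    (hstab : ∀ α ∈ R, ∀ β ∈ R, β - (2 * ⟪β, α⟫ / ⟪α, α⟫) • α ∈ R)
    (U : Submodule ℝ V)
    (hU : ∀ α ∈ R, ∀ u ∈ U, u - (2 * ⟪u, α⟫ / ⟪α, α⟫) • α ∈ U) :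
    ∀ α ∈ R, α ∈ U ∨ α ∈ Uᗮ := by
  intro α hα
  by_cases h : α ∈ Uᗮ
  · exact Or.inr h
  · left
    rw [Submodule.mem_orthogonal] at h
    push_neg at h
    obtain ⟨u, hu, hne⟩ := h
    have h1 : u - (2 * ⟪u, α⟫ / ⟪α, α⟫) • α ∈ U := hU α hα u hu
    have h2 : (2 * ⟪u, α⟫ / ⟪α, α⟫) • α ∈ U := by
      have := U.sub_mem hu h1
      simpa using this
    have hαα : ⟪α, α⟫ ≠ 0 := by
      exact inner_self_ne_zero.mpr (hR0 α hα)
    have hc : (2 * ⟪u, α⟫ / ⟪α, α⟫) ≠ 0 := by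
      apply div_ne_zero _ hαα
      simpa using hne
    have := U.smul_mem (2 * ⟪u, α⟫ / ⟪α, α⟫)⁻¹ h2
    rwa [smul_smul, inv_mul_cancel₀ hc, one_smul] at this
end

section
/- Let L be a number field of degree d over ℚ, let q ≥ 1 be an integer, and let π₁, …, πₙ ∈ O_L be Weil q-numbers. Let a = (a₁, …, aₙ) and b = (b₁, …, bₙ) be tuples of nonnegative integers, set M := max(a₁ + ⋯ + aₙ, b₁ + ⋯ + bₙ), let λ be a nonzero prime ideal of O_L, and let m be a nonnegative integer with N(λ)^{2m} > 4^{d} · q^{d·M}, where N(λ) is the absolute norm of λ. If ∏_{i=1}^{n} πᵢ^{aᵢ} − ∏_{i=1}^{n} πᵢ^{bᵢ} ∈ λ^{m}, then ∏_{i=1}^{n} πᵢ^{aᵢ} = ∏_{i=1}^{n} πᵢ^{bᵢ}. -/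
/-!
If `x` is a nonzero element of an ideal `I`, then `N(I)` divides the field norm of `x`, which is
the product of the `|ι x|` over the `d` complex embeddings `ι`. For the difference of two monomials
in Weil `q`-numbers each `|ι x|²` is at most `(q^{M/2} + q^{M/2})² = 4 q^M`, so
`N(λ)^{2m} ≤ N(x)² ≤ 4^d q^{dM}` unless `x = 0`.
-/

open NumberField

lemma norm_sub_sq_le_four_mul {E : Type*} [SeminormedAddGroup E] {u v : E} {B : ℝ}
    (hu : ‖u‖ ^ 2 ≤ B) (hv : ‖v‖ ^ 2 ≤ B) : ‖u - v‖ ^ 2 ≤ 4 * B := by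
  have huv := norm_sub_le u v
  nlinarith [norm_nonneg (u - v), norm_nonneg u, norm_nonneg v, sq_nonneg (‖u‖ - ‖v‖)]

lemma norm_prod_pow_sq_eq {F ι : Type*} [NormedField F] [Fintype ι] {x : ι → F} {q : ℝ}
    (hx : ∀ i, ‖x i‖ ^ 2 = q) (c : ι → ℕ) : ‖∏ i, x i ^ c i‖ ^ 2 = q ^ ∑ i, c i := by
  simp only [norm_prod, norm_pow, ← Finset.prod_pow, ← Finset.prod_pow_eq_pow_sum]
  exact Finset.prod_congr rfl fun i _ => by rw [← pow_mul, mul_comm, pow_mul, hx]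

lemma prod_norm_embeddings_eq_abs_norm {K : Type*} [Field K] [NumberField K] (x : K) :
    ∏ φ : K →+* ℂ, ‖φ x‖ = |(Algebra.norm ℚ x : ℝ)| := by
  rw [Fintype.prod_equiv (RingHom.equivRatAlgHom K ℂ) (fun φ => ‖φ x‖) (fun σ => ‖σ x‖)
      (fun _ => by simp [RingHom.equivRatAlgHom_apply]), ← norm_prod,
    ← Algebra.norm_eq_prod_embeddings, eq_ratCast, Complex.norm_ratCast]

lemma absNorm_le_prod_norm_embeddings {K : Type*} [Field K] [NumberField K]
    {I : Ideal (𝓞 K)} {x : 𝓞 K} (hx : x ∈ I) (hx0 : x ≠ 0) :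
    (Ideal.absNorm I : ℝ) ≤ ∏ φ : K →+* ℂ, ‖φ x‖ := by
  have hdvd : Ideal.absNorm I ∣ (Algebra.norm ℤ x).natAbs :=
    Int.natCast_dvd.mp (Ideal.absNorm_dvd_norm_of_mem hx)
  have hle := Nat.le_of_dvd (Int.natAbs_pos.mpr (Algebra.norm_ne_zero_iff.mpr hx0)) hdvd
  rw [prod_norm_embeddings_eq_abs_norm, ← Algebra.coe_norm_int, Rat.cast_intCast,
    ← Int.cast_abs, Int.abs_eq_natAbs]
  exact_mod_cast hle

lemma eq_zero_of_mem_of_norm_embeddings_sq_le {K : Type*} [Field K] [NumberField K]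
    {I : Ideal (𝓞 K)} {x : 𝓞 K} {B : ℝ} (hx : x ∈ I) (hB : ∀ φ : K →+* ℂ, ‖φ x‖ ^ 2 ≤ B)
    (hI : B ^ Module.finrank ℚ K < (Ideal.absNorm I : ℝ) ^ 2) : x = 0 := by
  by_contra hx0
  refine hI.not_ge ?_
  calc (Ideal.absNorm I : ℝ) ^ 2
      ≤ (∏ φ : K →+* ℂ, ‖φ x‖) ^ 2 := by
        gcongr
        exact absNorm_le_prod_norm_embeddings hx hx0
    _ = ∏ φ : K →+* ℂ, ‖φ x‖ ^ 2 := (Finset.prod_pow _ _ _).symm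
    _ ≤ ∏ _φ : K →+* ℂ, B := Finset.prod_le_prod (fun _ _ => sq_nonneg _) fun φ _ => hB φ
    _ = B ^ Module.finrank ℚ K := by
        rw [Finset.prod_const, Finset.card_univ, Embeddings.card K ℂ]

theorem weil_monomials_eq_of_congruence_general
    {L : Type*} [Field L] [NumberField L]
    (q : ℕ) (hq : 1 ≤ q) (n : ℕ) (π : Fin n → 𝓞 L)
    (hweil : ∀ i, ∀ ι : L →+* ℂ, ‖ι (π i : L)‖ ^ 2 = q)
    (a b : Fin n → ℕ)
    (lam : Ideal (𝓞 L))
    (m : ℕ)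
    (hnorm : 4 ^ (Module.finrank ℚ L)
        * q ^ (Module.finrank ℚ L * max (∑ i, a i) (∑ i, b i))
      < Ideal.absNorm lam ^ (2 * m))
    (hmem : (∏ i, π i ^ a i - ∏ i, π i ^ b i) ∈ lam ^ m) :
    ∏ i, π i ^ a i = ∏ i, π i ^ b i := by
  set M := max (∑ i, a i) (∑ i, b i)
  have hmonomial : ∀ (ι : L →+* ℂ) (c : Fin n → ℕ), ∑ i, c i ≤ M →
      ‖ι (∏ i, (π i : L) ^ c i)‖ ^ 2 ≤ (q : ℝ) ^ M := fun ι c hc => by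
    simp only [map_prod, map_pow]
    rw [norm_prod_pow_sq_eq (hweil · ι)]
    exact pow_le_pow_right₀ (by exact_mod_cast hq) hc
  refine sub_eq_zero.mp (eq_zero_of_mem_of_norm_embeddings_sq_le hmem (B := 4 * q ^ M)
    (fun ι => ?_) ?_)
  · push_cast
    rw [map_sub]
    exact norm_sub_sq_le_four_mul (hmonomial ι a (le_max_left _ _))
      (hmonomial ι b (le_max_right _ _))
  · rw [mul_pow, ← pow_mul, mul_comm M, map_pow, Nat.cast_pow, ← pow_mul, mul_comm m]
    exact_mod_cast hnorm

/-- If the difference of two monomials in Weil `q`-numbers lies in `λ^m` for a nonzero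
prime ideal `λ` with `N(λ)^{2m} > 4^d · q^{d·M}`, then the two monomials are equal. -/
theorem weil_monomials_eq_of_congruence
    {L : Type*} [Field L] [NumberField L]
    (q : ℕ) (hq : 1 ≤ q) (n : ℕ) (π : Fin n → 𝓞 L)
    (hweil : ∀ i, ∀ ι : L →+* ℂ, ‖ι (π i : L)‖ ^ 2 = q)
    (a b : Fin n → ℕ)
    (lam : Ideal (𝓞 L)) (hlam_ne : lam ≠ ⊥) (hlam_prime : lam.IsPrime)
    (m : ℕ)
    (hnorm : 4 ^ (Module.finrank ℚ L)
        * q ^ (Module.finrank ℚ L * max (∑ i, a i) (∑ i, b i))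
      < Ideal.absNorm lam ^ (2 * m))
    (hmem : (∏ i, π i ^ a i - ∏ i, π i ^ b i) ∈ lam ^ m) :
    ∏ i, π i ^ a i = ∏ i, π i ^ b i :=
  weil_monomials_eq_of_congruence_general q hq n π hweil a b lam m hnorm hmem
end

section
/- For all integers r ≥ 1 and all integers m with 2 ≤ m ≤ r, one has C(r+1, 2m)·C(2m, m) ≠ r(r+1), where C(·,·) denotes the binomial coefficient (with C(a,b) = 0 when b > a). Moreover, if r ≥ 6 and m ≥ 2 satisfies 2m ≤ r+1, then C(r+1, 2m)·C(2m, m) > r(r+1). -/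
/-!
Write `n = r + 1`. Choosing `I` and then `J` gives
`C(n, 2m)·C(2m, m) = C(n, m)·C(n - m, m)`, and `r(r+1) = 2·C(n, 2)`.
If `2m < n`, then `C(n, m) ≥ C(n, 2)` by unimodality and `C(n - m, m) ≥ C(m + 1, m) ≥ 3`.
If `2m = n`, the product is the central binomial coefficient `C(2m, m)`; its recursion
`(m + 1)·C(2m + 2, m + 1) = 2(2m + 1)·C(2m, m)` multiplies it by almost 4 at each step, so from
`C(8, 4) = 70 > 56` on it stays above `2m(2m - 1)`. The finitely many cases `r ≤ 5` are checked directly.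
-/

namespace Nat

theorem choose_le_choose_of_le_of_le_half {n k l : ℕ} (hkl : k ≤ l) (hl : l ≤ n / 2) :
    n.choose k ≤ n.choose l := by
  induction l, hkl using Nat.le_induction with
  | base => rfl
  | succ l _ ih => exact (ih (by omega)).trans (choose_le_succ_of_lt_half_left (by omega))

theorem pred_mul_lt_centralBinom {m : ℕ} (hm : 4 ≤ m) :
    (2 * m - 1) * (2 * m) < m.centralBinom := by
  induction m, hm using Nat.le_induction with
  | base => decide
  | succ m hm ih =>
    obtain ⟨k, rfl⟩ : ∃ k, m = k + 1 := ⟨m - 1, by omega⟩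
    rw [show 2 * (k + 1) - 1 = 2 * k + 1 by omega] at ih
    rw [show 2 * (k + 1 + 1) - 1 = 2 * k + 3 by omega]
    refine Nat.lt_of_mul_lt_mul_left (a := k + 2) ?_
    rw [succ_mul_centralBinom_succ]
    nlinarith

theorem mul_succ_lt_choose_mul_choose_of_two_mul_lt {r m : ℕ} (hm : 2 ≤ m)
    (hmr : 2 * m < r + 1) :
    r * (r + 1) < (r + 1).choose (2 * m) * (2 * m).choose m := by
  rw [choose_mul (by omega), show 2 * m - m = m by omega]
  have hpairs : (r + 1).choose 2 * 2 = r * (r + 1) := by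
    rw [← add_one_mul_choose_eq, choose_one_right, Nat.mul_comm]
  have hfirst : (r + 1).choose 2 ≤ (r + 1).choose m :=
    choose_le_choose_of_le_of_le_half hm (by omega)
  have hsecond : 3 ≤ (r + 1 - m).choose m :=
    calc 3 ≤ m + 1 := by omega
      _ = (m + 1).choose m := (choose_succ_self_right m).symm
      _ ≤ (r + 1 - m).choose m := choose_le_choose m (by omega)
  have hpos : 0 < (r + 1).choose 2 := choose_pos (by omega)
  calc r * (r + 1) = (r + 1).choose 2 * 2 := hpairs.symm
    _ < (r + 1).choose 2 * 3 := by omega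
    _ ≤ (r + 1).choose m * (r + 1 - m).choose m := Nat.mul_le_mul hfirst hsecond

end Nat

/-- For `r ≥ 1` and `2 ≤ m ≤ r`, `C(r+1, 2m)·C(2m, m) ≠ r(r+1)`; moreover for `r ≥ 6`,
`m ≥ 2` with `2m ≤ r+1`, one has `C(r+1, 2m)·C(2m, m) > r(r+1)`. -/
theorem choose_products_ne_and_gt :
    (∀ r m : ℕ, 1 ≤ r → 2 ≤ m → m ≤ r →
      Nat.choose (r + 1) (2 * m) * Nat.choose (2 * m) m ≠ r * (r + 1)) ∧
    (∀ r m : ℕ, 6 ≤ r → 2 ≤ m → 2 * m ≤ r + 1 →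
      r * (r + 1) < Nat.choose (r + 1) (2 * m) * Nat.choose (2 * m) m) := by
  have hlarge : ∀ r m : ℕ, 6 ≤ r → 2 ≤ m → 2 * m ≤ r + 1 →
      r * (r + 1) < Nat.choose (r + 1) (2 * m) * Nat.choose (2 * m) m := by
    intro r m hr hm hmr
    rcases hmr.lt_or_eq with hlt | hcentral
    · exact Nat.mul_succ_lt_choose_mul_choose_of_two_mul_lt hm hlt
    · rw [← hcentral, Nat.choose_self, Nat.one_mul, ← Nat.centralBinom_eq_two_mul_choose,
        show r = 2 * m - 1 by omega]
      exact Nat.pred_mul_lt_centralBinom (by omega)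
  refine ⟨fun r m hr hm hmr => ?_, hlarge⟩
  rcases Nat.lt_or_ge (r + 1) (2 * m) with hzero | hmr'
  · rw [Nat.choose_eq_zero_of_lt hzero, Nat.zero_mul]
    exact (Nat.mul_pos (by omega) (by omega)).ne
  rcases Nat.lt_or_ge r 6 with hsmall | hr6
  · interval_cases r <;> interval_cases m <;> decide
  · exact (hlarge r m hr6 hm hmr').ne'
end
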